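/- arXiv:0808.3649 — 3 statements merged into one kernel-verified Lean document; each statement's English description precedes it below -/
import Mathlib

section
/- If H₁ ⊂ H₂ ⊂ H₃ are three hulls in ℍ w.r.t. ∞, then H₂/H₁ ⊂ H₃/H₁ and (H₃/H₁)/(H₂/H₁) = H₃/H₂. -/
open Complex Set Bornology Filter MeasureTheory Metric

noncomputable section

def UHP : Set ℂ := {z : ℂ | 0 < z.im}

def IsHull (H : Set ℂ) : Prop :=
  H ⊆ UHP ∧ Bornology.IsBounded H ∧ (∀ z ∈ closure H, 0 < z.im → z ∈ H) ∧
    SimplyConnectedSpace ↥(UHP \ H)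

def ConformalOnto (φ : ℂ → ℂ) (U V : Set ℂ) : Prop :=
  AnalyticOnNhd ℂ φ U ∧ Set.InjOn φ U ∧ φ '' U = V

def NormalizedAtInf (φ : ℂ → ℂ) (H : Set ℂ) (c : ℝ) : Prop :=
  ∃ C R : ℝ, 0 < C ∧ ∀ z ∈ UHP \ H, R ≤ ‖z‖ →
    ‖φ z - z - (c : ℂ) / z‖ ≤ C / ‖z‖ ^ 2

def IsLoewnerMap (H : Set ℂ) (φ : ℂ → ℂ) (c : ℝ) : Prop :=
  ConformalOnto φ (UHP \ H) UHP ∧ NormalizedAtInf φ H c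

def SigmaStar (H : Set ℂ) : Set ℂ :=
  (H ∪ (starRingEnd ℂ) '' H ∪ {z : ℂ | z.im = 0 ∧ z ∈ closure H})ᶜ

def IsExtendedLoewnerMap (H : Set ℂ) (φ : ℂ → ℂ) (c : ℝ) : Prop :=
  IsLoewnerMap H φ c ∧ AnalyticOnNhd ℂ φ (SigmaStar H) ∧
    ∀ z ∈ SigmaStar H, φ ((starRingEnd ℂ) z) = (starRingEnd ℂ) (φ z)

def IsLoewnerChain (T : ℝ) (ξ : ℝ → ℝ) (K : ℝ → Set ℂ) (φ : ℝ → ℂ → ℂ) : Prop :=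
  ContinuousOn ξ (Set.Ico 0 T) ∧
  (∀ t ∈ Set.Ico (0:ℝ) T, IsHull (K t) ∧ IsLoewnerMap (K t) (φ t) (2 * t)) ∧
  (∀ z ∈ UHP, φ 0 z = z) ∧
  (∀ t ∈ Set.Ico (0:ℝ) T, ∀ z ∈ UHP \ K t, ∀ s ∈ Set.Icc (0:ℝ) t,
    φ s z ≠ (ξ s : ℂ) ∧ HasDerivAt (fun u => φ u z) (2 / (φ s z - (ξ s : ℂ))) s) ∧
  (∀ s t : ℝ, 0 ≤ s → s ≤ t → t < T → K s ⊆ K t)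

open scoped Topology ComplexConjugate
open Function

/-!
The key identity is `φ₂₁ ∘ φ₁ = φ₂` on `UHP \ H₂`; the rest is set algebra using injectivity
of `φ₁`. Both maps send `UHP \ H₂` conformally onto `UHP` and are `z + o(1)` at `∞`, so
`F := φ₂ ∘ (φ₂₁ ∘ φ₁)⁻¹` is a holomorphic automorphism of `UHP` with `F w - w → 0` at `∞`.
Conjugated by Cayley transforms, `F` becomes an automorphism of the disc fixing `0`, hence a
rotation by the Schwarz lemma; a nontrivial rotation would keep `F` bounded near `∞`, and the
remaining real affine map `w ↦ a w + b` is the identity by the asymptotics.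
-/

theorem mem_UHP_iff {w : ℂ} : w ∈ UHP ↔ 0 < w.im := Iff.rfl

theorem tendsto_cobounded_of_tendsto_sub_self {E : Type*} [SeminormedAddCommGroup E]
    {l : Filter E} {f : E → E} {c : E} (hl : l ≤ cobounded E)
    (hf : Tendsto (fun z => f z - z) l (𝓝 c)) : Tendsto f l (cobounded E) := by
  replace hl : Tendsto (fun z => z) l (cobounded E) := hl
  rw [← tendsto_norm_atTop_iff_cobounded] at hl ⊢
  refine tendsto_atTop_mono (fun z => ?_) (hl.atTop_add hf.norm.neg)
  simpa [norm_sub_rev z] using norm_sub_norm_le z (z - f z)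

theorem eq_zero_of_tendsto_mul_add {𝕜 : Type*} [NormedField 𝕜] {a b : 𝕜} {l : Filter 𝕜}
    [l.NeBot] (hl : l ≤ cobounded 𝕜) (h : Tendsto (fun w => a * w + b) l (𝓝 0)) :
    a = 0 ∧ b = 0 := by
  have ha : a = 0 := by
    by_contra ha
    refine h.not_tendsto (disjoint_nhds_cobounded 0) ?_
    replace hl : Tendsto (fun w => w) l (cobounded 𝕜) := hl
    rw [← tendsto_norm_atTop_iff_cobounded] at hl ⊢
    refine tendsto_atTop_mono (fun w => ?_)
      ((hl.const_mul_atTop (norm_pos_iff.2 ha)).atTop_add (tendsto_const_nhds (x := -‖b‖)))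
    simpa [norm_mul] using norm_sub_norm_le (a * w) (-b)
  simp only [ha, zero_mul, zero_add] at h
  exact ⟨ha, tendsto_nhds_unique tendsto_const_nhds h⟩


namespace AnalyticOnNhd

variable {Ω : Set ℂ} {G : ℂ → ℂ} {z : ℂ}

theorem not_eventually_eq_of_injOn (hΩ : IsOpen Ω) (hinj : InjOn G Ω) (hz : z ∈ Ω) :
    ¬∀ᶠ w in 𝓝 z, G w = G z := fun hconst => by
  have hloc : ∀ᶠ w in 𝓝 z, w = z :=
    (hconst.and (hΩ.eventually_mem hz)).mono fun w hw => hinj hw.2 hz hw.1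
  obtain ⟨w, hw, hne⟩ :=
    ((hloc.filter_mono nhdsWithin_le_nhds).and (self_mem_nhdsWithin (s := {z}ᶜ))).exists
  exact hne hw

theorem nhds_le_map_nhds_of_injOn (hG : AnalyticOnNhd ℂ G Ω) (hΩ : IsOpen Ω)
    (hinj : InjOn G Ω) (hz : z ∈ Ω) : 𝓝 (G z) ≤ map G (𝓝 z) :=
  (hG z hz).eventually_constant_or_nhds_le_map_nhds.resolve_left
    (not_eventually_eq_of_injOn hΩ hinj hz)

theorem tendsto_invFunOn (hG : AnalyticOnNhd ℂ G Ω) (hΩ : IsOpen Ω) (hinj : InjOn G Ω)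
    (hz : z ∈ Ω) : Tendsto (invFunOn G Ω) (𝓝 (G z)) (𝓝 z) := by
  refine (tendsto_map'_iff.2 (tendsto_id.congr' ?_)).mono_left
    (hG.nhds_le_map_nhds_of_injOn hΩ hinj hz)
  filter_upwards [hΩ.mem_nhds hz] with w hw using (hinj.leftInvOn_invFunOn hw).symm

theorem hasDerivAt_invFunOn (hG : AnalyticOnNhd ℂ G Ω) (hΩ : IsOpen Ω) (hinj : InjOn G Ω)
    (hz : z ∈ Ω) (hd : deriv G z ≠ 0) : HasDerivAt (invFunOn G Ω) (deriv G z)⁻¹ (G z) := by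
  have hzG : invFunOn G Ω (G z) = z := hinj.leftInvOn_invFunOn hz
  refine HasDerivAt.of_local_left_inverse (f := G) ?_ ?_ hd ?_
  · rw [ContinuousAt, hzG]
    exact hG.tendsto_invFunOn hΩ hinj hz
  · rw [hzG]
    exact (hG z hz).differentiableAt.hasDerivAt
  · filter_upwards [hG.nhds_le_map_nhds_of_injOn hΩ hinj hz (image_mem_map (hΩ.mem_nhds hz))]
      with w hw using invFunOn_eq hw

/-- At the critical points of `G`, which are isolated, this follows from the removable
singularity theorem. -/
theorem differentiableOn_invFunOn (hG : AnalyticOnNhd ℂ G Ω) (hΩ : IsOpen Ω)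
    (hinj : InjOn G Ω) : DifferentiableOn ℂ (invFunOn G Ω) (G '' Ω) := by
  rintro _ ⟨z, hz, rfl⟩
  rcases (hG.deriv z hz).eventually_eq_zero_or_eventually_ne_zero with hzero | hne
  · obtain ⟨ε, hε, hball⟩ :=
      Metric.eventually_nhds_iff_ball.1 (hzero.and (hΩ.eventually_mem hz))
    refine absurd ?_ (not_eventually_eq_of_injOn hΩ hinj hz)
    filter_upwards [ball_mem_nhds z hε] with w hw
    exact isOpen_ball.is_const_of_deriv_eq_zero (convex_ball z ε).isPreconnected
      (fun x hx => (hG x (hball x hx).2).differentiableAt.differentiableWithinAt)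
      (fun x hx => (hball x hx).1) hw (mem_ball_self hε)
  · have hcont : ContinuousAt (invFunOn G Ω) (G z) := by
      rw [ContinuousAt, hinj.leftInvOn_invFunOn hz]
      exact hG.tendsto_invFunOn hΩ hinj hz
    have hregular : ∀ᶠ x in 𝓝 z, x ∈ Ω ∧ (x ≠ z → deriv G x ≠ 0) :=
      (hΩ.eventually_mem hz).and (eventually_nhdsWithin_iff.1 hne)
    have hpunct : ∀ᶠ y in 𝓝[≠] G z, DifferentiableAt ℂ (invFunOn G Ω) y := by
      refine eventually_nhdsWithin_iff.2 ?_
      filter_upwards [hG.nhds_le_map_nhds_of_injOn hΩ hinj hz (image_mem_map hregular)]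
      rintro _ ⟨x, ⟨hxΩ, hx⟩, rfl⟩ hne
      exact (hG.hasDerivAt_invFunOn hΩ hinj hxΩ
        (hx (by rintro rfl; exact hne rfl))).differentiableAt
    exact (Complex.analyticAt_of_differentiable_on_punctured_nhds_of_continuousAt hpunct
      hcont).differentiableAt.differentiableWithinAt

end AnalyticOnNhd

def cayleyToDisc (w₀ w : ℂ) : ℂ := (w - w₀) / (w - conj w₀)

def cayleyFromDisc (w₀ ζ : ℂ) : ℂ := (w₀ - conj w₀ * ζ) / (1 - ζ)

section Cayley

variable {w₀ w ζ : ℂ}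

theorem sub_conj_ne_zero_of_mem_UHP (hw₀ : w₀ ∈ UHP) (hw : w ∈ UHP) :
    w - conj w₀ ≠ 0 := by
  intro h
  have := congrArg im h
  simp only [sub_im, conj_im, sub_neg_eq_add, zero_im] at this
  linarith [mem_UHP_iff.1 hw, mem_UHP_iff.1 hw₀]

theorem one_sub_ne_zero_of_mem_ball (hζ : ζ ∈ ball (0 : ℂ) 1) : 1 - ζ ≠ 0 :=
  sub_ne_zero.2 (ne_of_mem_of_not_mem hζ (by simp)).symm

theorem cayleyToDisc_self : cayleyToDisc w₀ w₀ = 0 := by simp [cayleyToDisc]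

theorem cayleyFromDisc_zero : cayleyFromDisc w₀ 0 = w₀ := by simp [cayleyFromDisc]

theorem mapsTo_cayleyToDisc (hw₀ : w₀ ∈ UHP) : MapsTo (cayleyToDisc w₀) UHP (ball 0 1) := by
  intro w hw
  have hden := sub_conj_ne_zero_of_mem_UHP hw₀ hw
  rw [mem_ball_zero_iff, cayleyToDisc, norm_div, div_lt_one (norm_pos_iff.2 hden),
    ← sq_lt_sq₀ (norm_nonneg _) (norm_nonneg _), ← normSq_eq_norm_sq, ← normSq_eq_norm_sq]
  simp only [normSq_apply, sub_re, sub_im, conj_re, conj_im]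
  nlinarith [mem_UHP_iff.1 hw, mem_UHP_iff.1 hw₀]

theorem mapsTo_cayleyFromDisc (hw₀ : w₀ ∈ UHP) :
    MapsTo (cayleyFromDisc w₀) (ball 0 1) UHP := by
  intro ζ hζ
  have hζ1 : normSq ζ < 1 := by
    rw [normSq_eq_norm_sq, sq_lt_one_iff₀ (norm_nonneg _)]
    exact mem_ball_zero_iff.1 hζ
  rw [mem_UHP_iff, cayleyFromDisc, div_im, ← sub_div]
  refine div_pos ?_ (normSq_pos.2 (one_sub_ne_zero_of_mem_ball hζ))
  simp only [normSq_apply] at hζ1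
  simp only [sub_im, sub_re, one_re, one_im, mul_im, mul_re, conj_re, conj_im]
  nlinarith [mem_UHP_iff.1 hw₀]

theorem leftInvOn_cayleyFromDisc_cayleyToDisc (hw₀ : w₀ ∈ UHP) :
    LeftInvOn (cayleyFromDisc w₀) (cayleyToDisc w₀) UHP := by
  intro w hw
  have hden := sub_conj_ne_zero_of_mem_UHP hw₀ hw
  have hw₀' := sub_conj_ne_zero_of_mem_UHP hw₀ hw₀
  have h1 : 1 - cayleyToDisc w₀ w = (w₀ - conj w₀) / (w - conj w₀) := by
    rw [cayleyToDisc]; field_simp; ring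
  rw [cayleyFromDisc, h1, cayleyToDisc]
  field_simp
  ring

theorem leftInvOn_cayleyToDisc_cayleyFromDisc (hw₀ : w₀ ∈ UHP) :
    LeftInvOn (cayleyToDisc w₀) (cayleyFromDisc w₀) (ball 0 1) := by
  intro ζ hζ
  have hζ1 := one_sub_ne_zero_of_mem_ball hζ
  have hw₀' := sub_conj_ne_zero_of_mem_UHP hw₀ hw₀
  have h1 : cayleyFromDisc w₀ ζ - conj w₀ = (w₀ - conj w₀) / (1 - ζ) := by
    rw [cayleyFromDisc]; field_simp; ring
  rw [cayleyToDisc, h1, cayleyFromDisc]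
  field_simp
  ring

theorem differentiableOn_cayleyToDisc (hw₀ : w₀ ∈ UHP) :
    DifferentiableOn ℂ (cayleyToDisc w₀) UHP := fun _ hw =>
  ((differentiableAt_id.sub_const w₀).div (differentiableAt_id.sub_const _)
    (sub_conj_ne_zero_of_mem_UHP hw₀ hw)).differentiableWithinAt

theorem differentiableAt_cayleyFromDisc (hζ : 1 - ζ ≠ 0) :
    DifferentiableAt ℂ (cayleyFromDisc w₀) ζ :=
  ((differentiableAt_const w₀).sub (differentiableAt_id.const_mul _)).div
    ((differentiableAt_const 1).sub differentiableAt_id) hζ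

theorem differentiableOn_cayleyFromDisc : DifferentiableOn ℂ (cayleyFromDisc w₀) (ball 0 1) :=
  fun _ hζ =>
    (differentiableAt_cayleyFromDisc (one_sub_ne_zero_of_mem_ball hζ)).differentiableWithinAt

theorem tendsto_cayleyToDisc_cobounded : Tendsto (cayleyToDisc w₀) (cobounded ℂ) (𝓝 1) := by
  have hinv : Tendsto (fun w => (w - conj w₀)⁻¹) (cobounded ℂ) (𝓝 0) :=
    tendsto_inv₀_cobounded.comp (tendsto_sub_const_cobounded _)
  refine (by simpa using (hinv.const_mul (conj w₀ - w₀)).const_add 1 :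
    Tendsto (fun w => 1 + (conj w₀ - w₀) * (w - conj w₀)⁻¹) _ (𝓝 1)).congr' ?_
  filter_upwards [eventually_cobounded_le_norm (‖w₀‖ + 1)] with w hw
  have hne : w - conj w₀ ≠ 0 := by
    rw [sub_ne_zero]; rintro rfl; rw [norm_conj] at hw; linarith
  rw [cayleyToDisc]
  field_simp
  ring

end Cayley
theorem Complex.exists_eqOn_mul_of_leftInvOn_ball {f g : ℂ → ℂ}
    (hf : DifferentiableOn ℂ f (ball 0 1)) (hg : DifferentiableOn ℂ g (ball 0 1))
    (hfm : MapsTo f (ball 0 1) (ball 0 1)) (hgm : MapsTo g (ball 0 1) (ball 0 1))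
    (hf0 : f 0 = 0) (hgf : LeftInvOn g f (ball 0 1)) :
    ∃ C : ℂ, ∀ ζ ∈ ball (0 : ℂ) 1, f ζ = C * ζ := by
  have h0 : (0 : ℂ) ∈ ball (0 : ℂ) 1 := mem_ball_self one_pos
  have hg0 : g 0 = 0 := by simpa [hf0] using hgf h0
  have hchain : deriv g 0 * deriv f 0 = 1 := by
    have hid : g ∘ f =ᶠ[𝓝 0] id := eventually_of_mem (isOpen_ball.mem_nhds h0) hgf
    have hfd : DifferentiableAt ℂ f 0 := hf.differentiableAt (isOpen_ball.mem_nhds h0)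
    have hgd : DifferentiableAt ℂ g (f 0) := by
      rw [hf0]; exact hg.differentiableAt (isOpen_ball.mem_nhds h0)
    rw [← deriv_id (0 : ℂ), ← hid.deriv_eq, deriv_comp 0 hgd hfd, hf0]
  have hf' : ‖deriv f 0‖ ≤ 1 := norm_deriv_le_one_of_mapsTo_ball hf
    (by rw [hf0]; exact hfm.mono_right ball_subset_closedBall) one_pos
  have hg' : ‖deriv g 0‖ ≤ 1 := norm_deriv_le_one_of_mapsTo_ball hg
    (by rw [hg0]; exact hgm.mono_right ball_subset_closedBall) one_pos
  have hnorm : ‖deriv f 0‖ = 1 := by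
    have := congrArg norm hchain
    rw [norm_mul, norm_one] at this
    nlinarith [norm_nonneg (deriv f 0), norm_nonneg (deriv g 0)]
  refine ⟨deriv f 0, fun ζ hζ => ?_⟩
  have := affine_of_mapsTo_ball_of_norm_dslope_eq_div hf
    (by rw [hf0]; exact hfm.mono_right ball_subset_closedBall) h0
    (by rw [dslope_same, hnorm, div_one]) hζ
  simpa [hf0, mul_comm] using this

theorem exists_eq_cayleyFromDisc_mul_of_leftInvOn {φ ψ : ℂ → ℂ}
    (hφ : DifferentiableOn ℂ φ UHP) (hψ : DifferentiableOn ℂ ψ UHP)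
    (hφm : MapsTo φ UHP UHP) (hψm : MapsTo ψ UHP UHP) (hψφ : LeftInvOn ψ φ UHP)
    {w₀ : ℂ} (hw₀ : w₀ ∈ UHP) :
    ∃ C : ℂ, ∀ w ∈ UHP, φ w = cayleyFromDisc (φ w₀) (C * cayleyToDisc w₀ w) := by
  have hw₁ : φ w₀ ∈ UHP := hφm hw₀
  have hS₀ := mapsTo_cayleyFromDisc hw₀
  have hS₁ := mapsTo_cayleyFromDisc hw₁
  obtain ⟨C, hC⟩ := Complex.exists_eqOn_mul_of_leftInvOn_ball
    (f := cayleyToDisc (φ w₀) ∘ φ ∘ cayleyFromDisc w₀)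
    (g := cayleyToDisc w₀ ∘ ψ ∘ cayleyFromDisc (φ w₀))
    ((differentiableOn_cayleyToDisc hw₁).comp
      (hφ.comp differentiableOn_cayleyFromDisc hS₀)
      (hφm.comp hS₀))
    ((differentiableOn_cayleyToDisc hw₀).comp
      (hψ.comp differentiableOn_cayleyFromDisc hS₁)
      (hψm.comp hS₁))
    ((mapsTo_cayleyToDisc hw₁).comp (hφm.comp hS₀))
    ((mapsTo_cayleyToDisc hw₀).comp (hψm.comp hS₁))
    (by simp [cayleyFromDisc_zero, cayleyToDisc_self])
    (fun ζ hζ => by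
      simp only [comp_apply]
      rw [leftInvOn_cayleyFromDisc_cayleyToDisc hw₁ (hφm (hS₀ hζ)), hψφ (hS₀ hζ),
        leftInvOn_cayleyToDisc_cayleyFromDisc hw₀ hζ])
  refine ⟨C, fun w hw => ?_⟩
  have := hC _ (mapsTo_cayleyToDisc hw₀ hw)
  simp only [comp_apply, leftInvOn_cayleyFromDisc_cayleyToDisc hw₀ hw] at this
  rw [← this, leftInvOn_cayleyFromDisc_cayleyToDisc hw₁ (hφm hw)]

theorem cayleyFromDisc_cayleyToDisc {w₀ w₀' w : ℂ} (hw₀ : w₀ ∈ UHP)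
    (hw : w ≠ conj w₀) :
    cayleyFromDisc w₀' (cayleyToDisc w₀ w) =
      (w₀' - conj w₀') / (w₀ - conj w₀) * w +
        (conj w₀' * w₀ - w₀' * conj w₀) / (w₀ - conj w₀) := by
  have hw₀' := sub_conj_ne_zero_of_mem_UHP hw₀ hw₀
  have hw' := sub_ne_zero.2 hw
  have h1 : 1 - cayleyToDisc w₀ w = (w₀ - conj w₀) / (w - conj w₀) := by
    rw [cayleyToDisc]; field_simp; ring
  rw [cayleyFromDisc, h1, cayleyToDisc]
  field_simp
  ring

theorem cayleyFromDisc_mul_cayleyToDisc_eq_self {w₀ w₀' C : ℂ} (hw₀ : w₀ ∈ UHP)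
    {l : Filter ℂ} [l.NeBot] (hl : l ≤ cobounded ℂ)
    (h : Tendsto (fun w => cayleyFromDisc w₀' (C * cayleyToDisc w₀ w) - w) l (𝓝 0))
    {w : ℂ} (hw : w ∈ UHP) : cayleyFromDisc w₀' (C * cayleyToDisc w₀ w) = w := by
  obtain rfl : C = 1 := by
    by_contra hC
    have hlim : Tendsto (fun w => cayleyFromDisc w₀' (C * cayleyToDisc w₀ w)) l
        (𝓝 (cayleyFromDisc w₀' C)) :=
      (differentiableAt_cayleyFromDisc (sub_ne_zero.2 (Ne.symm hC))).continuousAt.tendsto.comp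
        (by simpa using (tendsto_cayleyToDisc_cobounded.mono_left hl).const_mul C)
    exact (((hlim.sub h).congr fun w => sub_sub_cancel _ w).not_tendsto
      (disjoint_nhds_cobounded _)) hl
  have hne : ∀ᶠ w in l, w ≠ conj w₀ := hl (eventually_ne_cobounded _)
  obtain ⟨ha, hb⟩ := eq_zero_of_tendsto_mul_add
    (a := (w₀' - conj w₀') / (w₀ - conj w₀) - 1)
    (b := (conj w₀' * w₀ - w₀' * conj w₀) / (w₀ - conj w₀)) hl (h.congr' (by
    filter_upwards [hne] with w hw
    rw [one_mul, cayleyFromDisc_cayleyToDisc hw₀ hw]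
    ring))
  have hw' : w ≠ conj w₀ := ne_of_mem_of_not_mem hw (by simpa [mem_UHP_iff] using hw₀.le)
  rw [one_mul, cayleyFromDisc_cayleyToDisc hw₀ hw', hb, sub_eq_zero.1 ha]
  ring

theorem ConformalOnto.comp {f g : ℂ → ℂ} {U V W : Set ℂ} (hg : ConformalOnto g V W)
    (hf : ConformalOnto f U V) : ConformalOnto (g ∘ f) U W :=
  have hfUV : MapsTo f U V := hf.2.2 ▸ mapsTo_image f U
  ⟨fun z hz => (hg.1 _ (hfUV hz)).comp (hf.1 z hz), hg.2.1.comp hf.2.1 hfUV,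
    by rw [image_comp, hf.2.2, hg.2.2]⟩

theorem ConformalOnto.mono {f : ℂ → ℂ} {U U' V : Set ℂ} (hf : ConformalOnto f U V)
    (hU : U' ⊆ U) : ConformalOnto f U' (f '' U') :=
  ⟨hf.1.mono hU, hf.2.1.mono hU, rfl⟩

theorem ConformalOnto.eqOn_of_tendsto_sub {Ω : Set ℂ} (hΩ : IsOpen Ω) {F G : ℂ → ℂ}
    (hF : ConformalOnto F Ω UHP) (hG : ConformalOnto G Ω UHP) {l : Filter ℂ} [l.NeBot]
    (hlΩ : l ≤ 𝓟 Ω) (hGcob : Tendsto G l (cobounded ℂ))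
    (hFG : Tendsto (fun z => F z - G z) l (𝓝 0)) : EqOn F G Ω := by
  obtain ⟨hFa, hFi, hFim⟩ := hF
  obtain ⟨hGa, hGi, hGim⟩ := hG
  set φ := F ∘ invFunOn G Ω
  set ψ := G ∘ invFunOn F Ω
  have hφG : ∀ x ∈ Ω, φ (G x) = F x := fun x hx => congrArg F (hGi.leftInvOn_invFunOn hx)
  have hψF : ∀ x ∈ Ω, ψ (F x) = G x := fun x hx => congrArg G (hFi.leftInvOn_invFunOn hx)
  have hGΩ : MapsTo G Ω UHP := hGim ▸ mapsTo_image G Ω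
  have hφ : DifferentiableOn ℂ φ UHP := hGim ▸ hFa.differentiableOn.comp
    (hGa.differentiableOn_invFunOn hΩ hGi) fun _ hy => invFunOn_mem hy
  have hψ : DifferentiableOn ℂ ψ UHP := hFim ▸ hGa.differentiableOn.comp
    (hFa.differentiableOn_invFunOn hΩ hFi) fun _ hy => invFunOn_mem hy
  have hφm : MapsTo φ UHP UHP := by
    have : MapsTo φ (G '' Ω) (F '' Ω) := by
      rintro _ ⟨x, hx, rfl⟩; rw [hφG x hx]; exact mem_image_of_mem F hx
    rwa [hGim, hFim] at this
  have hψm : MapsTo ψ UHP UHP := by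
    have : MapsTo ψ (F '' Ω) (G '' Ω) := by
      rintro _ ⟨x, hx, rfl⟩; rw [hψF x hx]; exact mem_image_of_mem G hx
    rwa [hGim, hFim] at this
  have hψφ : LeftInvOn ψ φ UHP := by
    rw [← hGim]; rintro _ ⟨x, hx, rfl⟩; rw [hφG x hx, hψF x hx]
  have hI : I ∈ UHP := by simp [mem_UHP_iff]
  obtain ⟨C, hC⟩ := exists_eq_cayleyFromDisc_mul_of_leftInvOn hφ hψ hφm hψm hψφ hI
  have hlim : Tendsto (fun w => cayleyFromDisc (φ I) (C * cayleyToDisc I w) - w) (map G l)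
      (𝓝 0) := by
    refine tendsto_map'_iff.2 (hFG.congr' ?_)
    filter_upwards [hlΩ (mem_principal_self Ω)] with x hx
    simp only [comp_apply, ← hC _ (hGΩ hx), hφG x hx]
  intro x hx
  rw [← hφG x hx, hC _ (hGΩ hx)]
  exact cayleyFromDisc_mul_cayleyToDisc_eq_self hI hGcob hlim (hGΩ hx)

theorem NormalizedAtInf.tendsto_sub_self {φ : ℂ → ℂ} {H : Set ℂ} {c : ℝ}
    (h : NormalizedAtInf φ H c) :
    Tendsto (fun z => φ z - z) (cobounded ℂ ⊓ 𝓟 (UHP \ H)) (𝓝 0) := by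
  obtain ⟨C, R, -, hb⟩ := h
  have hrest :
      Tendsto (fun z => φ z - z - (c : ℂ) / z) (cobounded ℂ ⊓ 𝓟 (UHP \ H)) (𝓝 0) := by
    refine squeeze_zero_norm' ?_ (((tendsto_const_nhds (x := C)).div_atTop
      ((tendsto_pow_atTop two_ne_zero).comp tendsto_norm_cobounded_atTop)).mono_left inf_le_left)
    filter_upwards [mem_inf_of_left (eventually_cobounded_le_norm R),
      mem_inf_of_right (mem_principal_self _)] with z hR hz using hb z hz hR
  have hmain : Tendsto (fun z => (c : ℂ) / z) (cobounded ℂ ⊓ 𝓟 (UHP \ H)) (𝓝 0) := by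
    simpa [div_eq_mul_inv] using
      (tendsto_inv₀_cobounded.const_mul (c : ℂ)).mono_left inf_le_left
  simpa using hrest.add hmain

theorem NormalizedAtInf.tendsto_comp_sub_self {φ ψ : ℂ → ℂ} {H K U : Set ℂ} {c d : ℝ}
    (hφ : NormalizedAtInf φ H c) (hψ : NormalizedAtInf ψ K d) (hU : U ⊆ UHP \ H)
    (hmaps : MapsTo φ U (UHP \ K)) :
    Tendsto (fun z => ψ (φ z) - z) (cobounded ℂ ⊓ 𝓟 U) (𝓝 0) := by
  have hφU : Tendsto (fun z => φ z - z) (cobounded ℂ ⊓ 𝓟 U) (𝓝 0) :=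
    hφ.tendsto_sub_self.mono_left (inf_le_inf_left _ (principal_mono.2 hU))
  have hφcob : Tendsto φ (cobounded ℂ ⊓ 𝓟 U) (cobounded ℂ ⊓ 𝓟 (UHP \ K)) :=
    tendsto_inf.2 ⟨tendsto_cobounded_of_tendsto_sub_self inf_le_left hφU,
      tendsto_principal.2 (mem_inf_of_right (mem_principal.2 hmaps))⟩
  simpa using (hψ.tendsto_sub_self.comp hφcob).add hφU

theorem IsHull.isOpen_UHP_diff {H : Set ℂ} (hH : IsHull H) : IsOpen (UHP \ H) := by
  have hΩ : UHP \ H = UHP ∩ (closure H)ᶜ :=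
    subset_antisymm (fun z hz => ⟨hz.1, fun hcl => hz.2 (hH.2.2.1 z hcl hz.1)⟩)
      (fun z hz => ⟨hz.1, fun hzH => hz.2 (subset_closure hzH)⟩)
  rw [hΩ]
  exact (isOpen_lt continuous_const continuous_im).inter isClosed_closure.isOpen_compl

theorem Bornology.IsBounded.neBot_cobounded_inf_UHP_diff {H : Set ℂ} (hH : IsBounded H) :
    (cobounded ℂ ⊓ 𝓟 (UHP \ H)).NeBot := by
  have hI : Tendsto (fun t : ℝ => (t : ℂ) * I) atTop (cobounded ℂ) := by
    rw [← tendsto_norm_atTop_iff_cobounded]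
    simpa using tendsto_abs_atTop_atTop
  refine (tendsto_inf.2 ⟨hI, tendsto_principal.2 ?_⟩).neBot
  filter_upwards [eventually_gt_atTop 0, hI (isBounded_def.1 hH)] with t ht htH
  exact ⟨by simpa [mem_UHP_iff] using ht, htH⟩

theorem stmt_2_general (H1 H2 H3 : Set ℂ)
    (h2 : IsHull H2) (h3 : IsHull H3)
    (h12 : H1 ⊆ H2) (h23 : H2 ⊆ H3)
    (φ1 φ2 φ21 : ℂ → ℂ) (c1 c2 c21 : ℝ)
    (hφ1 : IsLoewnerMap H1 φ1 c1) (hφ2 : IsLoewnerMap H2 φ2 c2)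
    (hφ21 : IsLoewnerMap (φ1 '' (H2 \ H1)) φ21 c21) :
    φ1 '' (H2 \ H1) ⊆ φ1 '' (H3 \ H1) ∧
      φ21 '' (φ1 '' (H3 \ H1) \ φ1 '' (H2 \ H1)) = φ2 '' (H3 \ H2) := by
  obtain ⟨hφ1c, hφ1norm⟩ := hφ1
  have hφ1i : InjOn φ1 (UHP \ H1) := hφ1c.2.1
  have hφ1_UHP : φ1 '' (UHP \ H2) = UHP \ φ1 '' (H2 \ H1) := by
    rw [← sdiff_sdiff_sdiff_cancel_right h12, hφ1i.image_sdiff_subset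
      (sdiff_subset_sdiff_left h2.1), hφ1c.2.2]
  have hφ1_diff : φ1 '' (H3 \ H2) = φ1 '' (H3 \ H1) \ φ1 '' (H2 \ H1) := by
    rw [← sdiff_sdiff_sdiff_cancel_right h12, (hφ1i.mono (sdiff_subset_sdiff_left h3.1))
      |>.image_sdiff_subset (sdiff_subset_sdiff_left h23)]
  have hG : ConformalOnto (φ21 ∘ φ1) (UHP \ H2) UHP :=
    hφ21.1.comp (hφ1_UHP ▸ hφ1c.mono (sdiff_subset_sdiff_right h12))
  have := h2.2.1.neBot_cobounded_inf_UHP_diff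
  have hGasymp := hφ1norm.tendsto_comp_sub_self hφ21.2 (sdiff_subset_sdiff_right h12)
    (hφ1_UHP ▸ mapsTo_image φ1 _)
  have hEq := hφ2.1.eqOn_of_tendsto_sub h2.isOpen_UHP_diff hG inf_le_right
    (tendsto_cobounded_of_tendsto_sub_self inf_le_left hGasymp)
    (by simpa using hφ2.2.tendsto_sub_self.sub hGasymp)
  refine ⟨image_mono (sdiff_subset_sdiff_left h23), ?_⟩
  rw [← hφ1_diff, ← image_comp]
  exact ((hEq.mono (sdiff_subset_sdiff_left h3.1)).image_eq).symm

/-- for hulls H₁ ⊆ H₂ ⊆ H₃, H₂/H₁ ⊆ H₃/H₁ and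
(H₃/H₁)/(H₂/H₁) = H₃/H₂. -/
theorem stmt_2 (H1 H2 H3 : Set ℂ)
    (h1 : IsHull H1) (h2 : IsHull H2) (h3 : IsHull H3)
    (h12 : H1 ⊆ H2) (h23 : H2 ⊆ H3)
    (φ1 φ2 φ21 : ℂ → ℂ) (c1 c2 c21 : ℝ)
    (hφ1 : IsLoewnerMap H1 φ1 c1) (hφ2 : IsLoewnerMap H2 φ2 c2)
    (hφ21 : IsLoewnerMap (φ1 '' (H2 \ H1)) φ21 c21) :
    φ1 '' (H2 \ H1) ⊆ φ1 '' (H3 \ H1) ∧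
      φ21 '' (φ1 '' (H3 \ H1) \ φ1 '' (H2 \ H1)) = φ2 '' (H3 \ H2) :=
  stmt_2_general H1 H2 H3 h2 h3 h12 h23 φ1 φ2 φ21 c1 c2 c21 hφ1 hφ2 hφ21
end
end

section
/- Let H be a nonempty hull in ℍ w.r.t. ∞, and let Σ_H* = ℂ \ (H ∪ {z̄ : z ∈ H} ∪ Q_H) where Q_H = H̄ ∩ ℝ. There exists a constant M_H > 0 such that |φ_K(z) − z| ≤ M_H for every hull K ⊂ H and every z ∈ Σ_H* (after extending φ_K to Σ_H* by Schwarz reflection). -/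
open Complex Set Bornology Filter MeasureTheory Metric

noncomputable section

/-!
Choose `R` with `H` inside the disc of radius `R`; every hull `K ⊆ H` then lies there too, and all
bounds below depend only on `R`. As `φ = φ_K` is a homeomorphism of `ℍ \ K` onto `ℍ`, the maximum
principle gives `0 < Im φ z ≤ Im z`, so `|Im (φ z - z)| ≤ |Im z|` on `Σ_K*` by reflection. In the
chart `1 / z` at infinity, Borel–Carathéodory turns this into `|φ z - z| ≤ 4R` for `|z| ≥ 4R`.
Connectedness of `ℍ` minus a disc then forces `|φ z| ≤ 8R` for `z ∈ ℍ \ K` with `|z| ≤ 4R`, so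
`|φ z - z| ≤ 12R` on `ℍ \ K`, and by reflection and continuity on `Σ_K* ⊇ Σ_H*`.
-/

open scoped ComplexConjugate Topology

namespace Complex

theorem im_le_of_forall_mem_frontier_im_le {f : ℂ → ℂ} {U : Set ℂ} {a : ℝ} (hU : IsBounded U)
    (hf : DiffContOnCl ℂ f U) (hfr : ∀ z ∈ frontier U, (f z).im ≤ a) {z : ℂ}
    (hz : z ∈ closure U) : (f z).im ≤ a := by
  have hnorm : ∀ w, ‖exp (-(I * f w))‖ = Real.exp (f w).im := fun w => by
    simp [norm_exp, mul_re]
  have hexp : DiffContOnCl ℂ (fun w => exp (-(I * f w))) U :=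
    ⟨(hf.1.const_mul I).neg.cexp, (hf.2.const_mul I |>.neg).cexp⟩
  have := norm_le_of_forall_mem_frontier_norm_le hU hexp
    (fun w hw => (hnorm w).trans_le (Real.exp_le_exp.mpr (hfr w hw))) hz
  rwa [hnorm, Real.exp_le_exp] at this

theorem norm_le_two_mul_of_im_le {g : ℂ → ℂ} {ρ M : ℝ} (hM : 0 < M) (hρ : 0 < ρ)
    (hg : DifferentiableOn ℂ g (ball 0 ρ)) (hg0 : g 0 = 0)
    (him : ∀ w ∈ ball (0 : ℂ) ρ, (g w).im ≤ M) {w : ℂ} (hw : ‖w‖ ≤ ρ / 2) :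
    ‖g w‖ ≤ 2 * M := by
  have hbc := borelCaratheodory_zero (f := fun w => -I * g w) hM (hg.const_mul _)
    (fun w hw => by simpa [mul_re] using him w hw) hρ (mem_ball_zero_iff.mpr (by linarith))
    (by simp [hg0])
  rw [norm_mul, norm_neg, norm_I, one_mul] at hbc
  calc ‖g w‖ ≤ 2 * M * ‖w‖ / (ρ - ‖w‖) := hbc
    _ ≤ 2 * M := by
      rw [div_le_iff₀ (by linarith)]
      nlinarith

theorem isPreconnected_setOf_im_pos_lt_norm (s : ℝ) :
    IsPreconnected {w : ℂ | 0 < w.im ∧ s < ‖w‖} := by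
  have hpolar : {w : ℂ | 0 < w.im ∧ s < ‖w‖} =
      (fun p : ℝ × ℝ => (p.1 : ℂ) * exp (p.2 * I)) '' (Ioi (max s 0) ×ˢ Ioo 0 Real.pi) := by
    ext w
    constructor
    · rintro ⟨him, hs⟩
      have hw : w ≠ 0 := fun h => by simp [h] at him
      refine ⟨(‖w‖, arg w), ⟨max_lt hs (norm_pos_iff.mpr hw), ?_, ?_⟩, norm_mul_exp_arg_mul_I w⟩
      · exact (arg_nonneg_iff.mpr him.le).lt_of_ne fun h => by
          simp [(arg_eq_zero_iff.mp h.symm).2] at him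
      · exact arg_lt_pi_iff.mpr (Or.inr him.ne')
    · rintro ⟨⟨r, θ⟩, ⟨hr, hθ⟩, rfl⟩
      have hr0 : 0 < r := (le_max_right s 0).trans_lt hr
      refine ⟨?_, ?_⟩
      · simpa [exp_mul_I, ← ofReal_cos, ← ofReal_sin] using
          mul_pos hr0 (Real.sin_pos_of_pos_of_lt_pi hθ.1 hθ.2)
      · simpa [norm_exp, abs_of_pos hr0] using (le_max_left s 0).trans_lt hr
  rw [hpolar]
  exact (isPreconnected_Ioi.prod isPreconnected_Ioo).image _ (by fun_prop)

theorem le_of_forall_im_pos_of_conj {S : Set ℂ} (hS : IsOpen S) (hSc : ∀ z ∈ S, conj z ∈ S)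
    {F G : ℂ → ℝ} (hF : ContinuousOn F S) (hG : ContinuousOn G S)
    (hFc : ∀ z ∈ S, F (conj z) = F z) (hGc : ∀ z ∈ S, G (conj z) = G z)
    (h : ∀ z ∈ S, 0 < z.im → F z ≤ G z) {z : ℂ} (hz : z ∈ S) : F z ≤ G z := by
  rcases lt_trichotomy z.im 0 with hneg | hzero | hpos
  · rw [← hFc z hz, ← hGc z hz]
    exact h _ (hSc z hz) (by simpa using hneg)
  · have hcl : z ∈ closure (S ∩ {w | 0 < w.im}) :=
      hS.inter_closure ⟨hz, by simp [hzero]⟩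
    exact ContinuousWithinAt.closure_le hcl ((hF z hz).mono inter_subset_left)
      ((hG z hz).mono inter_subset_left) fun w hw => h w hw.1 hw.2
  · exact h z hz hpos

theorem differentiableOn_update_comp_inv {h : ℂ → ℂ} {R : ℝ} (hR : 0 < R)
    (hh : DifferentiableOn ℂ h {z | R < ‖z‖}) (hlim : Tendsto h (cobounded ℂ) (𝓝 0)) :
    DifferentiableOn ℂ (Function.update (fun w => h w⁻¹) 0 0) (ball 0 R⁻¹) := by
  rw [← differentiableOn_compl_singleton_and_continuousAt_iff (ball_mem_nhds 0 (inv_pos.2 hR))]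
  refine ⟨fun w hw => ?_, continuousAt_update_same.mpr (hlim.comp tendsto_inv₀_nhdsNE_zero)⟩
  have hw0 : w ≠ 0 := hw.2
  have hRw : R < ‖w⁻¹‖ := by
    rw [norm_inv]
    exact (lt_inv_comm₀ (norm_pos_iff.mpr hw0) hR).mp (mem_ball_zero_iff.mp hw.1)
  have hd : DifferentiableAt ℂ (fun w => h w⁻¹) w :=
    ((hh _ hRw).differentiableAt ((isOpen_lt continuous_const continuous_norm).mem_nhds hRw)).comp
      w (differentiableAt_inv hw0)
  exact hd.differentiableWithinAt.congr (fun y hy => Function.update_of_ne hy.2 _ _)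
    (Function.update_of_ne hw0 _ _)

end Complex

section Hull

variable {K : Set ℂ}

theorem IsHull.im_nonneg_of_mem_closure (hK : IsHull K) {z : ℂ} (hz : z ∈ closure K) :
    0 ≤ z.im :=
  closure_minimal (fun _ hw => (hK.1 hw).le) (isClosed_le continuous_const continuous_im) hz

theorem IsHull.mem_sigmaStar_iff (hK : IsHull K) {z : ℂ} :
    z ∈ SigmaStar K ↔ z ∉ closure K ∧ conj z ∉ closure K := by
  constructor
  · intro h
    refine ⟨fun hz => h ?_, fun hz => h ?_⟩
    · rcases (hK.im_nonneg_of_mem_closure hz).eq_or_lt with him | him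
      · exact Or.inr ⟨him.symm, hz⟩
      · exact Or.inl (Or.inl (hK.2.2.1 z hz him))
    · rcases (hK.im_nonneg_of_mem_closure hz).eq_or_lt with him | him
      · rw [conj_eq_iff_im.mpr (by simpa using him.symm)] at hz
        exact Or.inr ⟨by simpa using him.symm, hz⟩
      · exact Or.inl (Or.inr ⟨conj z, hK.2.2.1 _ hz him, conj_conj z⟩)
  · rintro ⟨h1, h2⟩ ((hz | ⟨w, hw, rfl⟩) | ⟨-, hz⟩)
    · exact h1 (subset_closure hz)
    · exact h2 (by rw [conj_conj]; exact subset_closure hw)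
    · exact h1 hz

theorem IsHull.isOpen_sigmaStar (hK : IsHull K) : IsOpen (SigmaStar K) := by
  have : SigmaStar K = (closure K)ᶜ ∩ conj ⁻¹' (closure K)ᶜ := by
    ext z; exact hK.mem_sigmaStar_iff
  rw [this]
  exact isClosed_closure.isOpen_compl.inter
    (isClosed_closure.isOpen_compl.preimage continuous_conj)

theorem IsHull.conj_mem_sigmaStar (hK : IsHull K) {z : ℂ} (hz : z ∈ SigmaStar K) :
    conj z ∈ SigmaStar K := by
  rw [hK.mem_sigmaStar_iff, conj_conj] at *
  exact hz.symm

theorem IsHull.diff_eq_inter_sigmaStar (hK : IsHull K) : UHP \ K = UHP ∩ SigmaStar K := by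
  ext z
  simp only [Set.mem_sdiff, mem_inter_iff, hK.mem_sigmaStar_iff, and_congr_right_iff]
  intro hz
  refine ⟨fun hzK => ⟨fun hcl => hzK (hK.2.2.1 z hcl hz), fun hcl => ?_⟩,
    fun h hzK => h.1 (subset_closure hzK)⟩
  have := hK.im_nonneg_of_mem_closure hcl
  rw [conj_im] at this
  exact (show 0 < z.im from hz).not_ge (by linarith)

theorem IsHull.diff_subset_sigmaStar (hK : IsHull K) : UHP \ K ⊆ SigmaStar K :=
  hK.diff_eq_inter_sigmaStar ▸ inter_subset_right

theorem IsHull.isOpen_diff (hK : IsHull K) : IsOpen (UHP \ K) := by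
  rw [hK.diff_eq_inter_sigmaStar]
  exact (isOpen_lt continuous_const continuous_im).inter hK.isOpen_sigmaStar

theorem IsHull.mem_sigmaStar_of_lt_norm (hK : IsHull K) {R : ℝ} (hKR : K ⊆ closedBall 0 R)
    {z : ℂ} (hz : R < ‖z‖) : z ∈ SigmaStar K := by
  have hcl : closure K ⊆ closedBall 0 R := closure_minimal hKR isClosed_closedBall
  rw [hK.mem_sigmaStar_iff]
  exact ⟨fun h => (mem_closedBall_zero_iff.mp (hcl h)).not_gt hz,
    fun h => (mem_closedBall_zero_iff.mp (hcl h)).not_gt (by rwa [norm_conj])⟩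

theorem sigmaStar_anti {H : Set ℂ} (hKH : K ⊆ H) : SigmaStar H ⊆ SigmaStar K :=
  compl_subset_compl.mpr <| union_subset_union
    (union_subset_union hKH (image_mono hKH)) fun _ hz => ⟨hz.1, closure_mono hKH hz.2⟩

end Hull

theorem ConformalOnto.nhds_le_map_nhds {φ : ℂ → ℂ} {U V : Set ℂ} (hφ : ConformalOnto φ U V)
    (hU : IsOpen U) {z : ℂ} (hz : z ∈ U) : 𝓝 (φ z) ≤ map φ (𝓝 z) := by
  refine (hφ.1 z hz).eventually_constant_or_nhds_le_map_nhds.resolve_left fun hconst => ?_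
  have hlocal : ∀ᶠ y in 𝓝 z, y = z :=
    (hconst.and (hU.eventually_mem hz)).mono fun y hy => hφ.2.1 hy.2 hz hy.1
  obtain ⟨y, hyz, hne⟩ :=
    ((hlocal.filter_mono nhdsWithin_le_nhds).and (self_mem_nhdsWithin (s := {z}ᶜ))).exists
  exact hne hyz

theorem ConformalOnto.apply_mem {φ : ℂ → ℂ} {U V : Set ℂ} (hφ : ConformalOnto φ U V) {z : ℂ}
    (hz : z ∈ U) : φ z ∈ V :=
  hφ.2.2 ▸ mem_image_of_mem φ hz

theorem ConformalOnto.exists_openPartialHomeomorph {φ : ℂ → ℂ} {U V : Set ℂ}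
    (hφ : ConformalOnto φ U V) (hU : IsOpen U) :
    ∃ e : OpenPartialHomeomorph ℂ ℂ, e.source = U ∧ e.target = V ∧ ⇑e = φ := by
  refine ⟨.ofContinuousOpenRestrict (hφ.2.1.toPartialEquiv φ U) hφ.1.continuousOn
    (isOpenMap_iff_nhds_le.mpr fun z => ?_) hU, rfl, hφ.2.2, rfl⟩
  calc 𝓝 (φ z) ≤ map φ (𝓝 (z : ℂ)) := hφ.nhds_le_map_nhds hU z.2
    _ = map φ (map Subtype.val (𝓝 z)) := by
      rw [map_nhds_subtype_val]; exact congrArg _ (hU.nhdsWithin_eq z.2).symm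
    _ = _ := map_map

section LoewnerMap

variable {K : Set ℂ} {φ : ℂ → ℂ} {c : ℝ}

theorem IsExtendedLoewnerMap.apply_conj_sub (hφ : IsExtendedLoewnerMap K φ c) {z : ℂ}
    (hz : z ∈ SigmaStar K) : φ (conj z) - conj z = conj (φ z - z) := by
  rw [hφ.2.2 z hz, map_sub]

theorem IsExtendedLoewnerMap.tendsto_sub_cobounded (hK : IsHull K)
    (hφ : IsExtendedLoewnerMap K φ c) : Tendsto (fun z => φ z - z) (cobounded ℂ) (𝓝 0) := by
  obtain ⟨C, Rn, -, hC⟩ := hφ.1.2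
  obtain ⟨R, hR⟩ := hK.2.1.subset_closedBall 0
  set r := max (max R Rn) 1
  have hSK : {z : ℂ | r < ‖z‖} ⊆ SigmaStar K := fun z hz =>
    hK.mem_sigmaStar_of_lt_norm hR (((le_max_left _ _).trans (le_max_left _ _)).trans_lt hz)
  have hbound : ∀ z : ℂ, r < ‖z‖ → ‖φ z - z‖ ≤ C / ‖z‖ ^ 2 + |c| / ‖z‖ := by
    intro z hz
    refine le_of_forall_im_pos_of_conj (F := fun z => ‖φ z - z‖)
      (G := fun z => C / ‖z‖ ^ 2 + |c| / ‖z‖) (isOpen_lt continuous_const continuous_norm)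
      (fun w hw => by simpa using hw) ((hφ.2.1.continuousOn.mono hSK).sub continuousOn_id).norm
      ?_ (fun w hw => by simp only [hφ.apply_conj_sub (hSK hw), norm_conj])
      (fun w _ => by simp only [norm_conj]) (fun w hw hw_im => ?_) hz
    · have hr : 0 < r := lt_max_of_lt_right one_pos
      exact (continuousOn_const.div (continuous_norm.pow 2).continuousOn fun w hw =>
        (pow_pos (hr.trans hw) 2).ne').add
        (continuousOn_const.div continuous_norm.continuousOn fun w hw => (hr.trans hw).ne')
    · have hwK : w ∉ K := fun h => (mem_closedBall_zero_iff.mp (hR h)).not_gt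
        (((le_max_left _ _).trans (le_max_left _ _)).trans_lt hw)
      have hcw : ‖(c : ℂ) / w‖ = |c| / ‖w‖ := by rw [norm_div, norm_real, Real.norm_eq_abs]
      calc ‖φ w - w‖ ≤ ‖φ w - w - c / w‖ + ‖(c : ℂ) / w‖ := norm_le_norm_sub_add _ _
        _ ≤ C / ‖w‖ ^ 2 + |c| / ‖w‖ := by
          rw [hcw]
          gcongr
          exact hC w ⟨hw_im, hwK⟩ (((le_max_right _ _).trans (le_max_left _ _)).trans hw.le)
  have hinv : Tendsto (fun z : ℂ => ‖z‖⁻¹) (cobounded ℂ) (𝓝 0) :=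
    tendsto_norm_cobounded_atTop.inv_tendsto_atTop
  have hG : Tendsto (fun z : ℂ => C / ‖z‖ ^ 2 + |c| / ‖z‖) (cobounded ℂ) (𝓝 0) := by
    simpa [div_eq_mul_inv, inv_pow] using ((hinv.pow 2).const_mul C).add (hinv.const_mul |c|)
  exact squeeze_zero_norm' ((tendsto_norm_cobounded_atTop.eventually_gt_atTop r).mono hbound) hG

theorem IsExtendedLoewnerMap.exists_forall_norm_sub_le (hK : IsHull K)
    (hφ : IsExtendedLoewnerMap K φ c) {ε : ℝ} (hε : 0 < ε) :
    ∃ ρ, ∀ z : ℂ, ρ ≤ ‖z‖ → ‖φ z - z‖ ≤ ε := by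
  obtain ⟨ρ, -, hρ⟩ := hasBasis_cobounded_norm.eventually_iff.mp
    ((hφ.tendsto_sub_cobounded hK).eventually (closedBall_mem_nhds 0 hε))
  exact ⟨ρ, fun z hz => by simpa using hρ hz⟩

/-- The left-hand side is connected, and it meets the open set on the right (at `φ (t i)` for
large `t`). Since `φ` is a homeomorphism of `ℍ \ K` onto `ℍ`, a limit point `w` of the right-hand
side in `ℍ` is `φ ζ` with `|ζ| ≥ ρ`, and `|ζ| = ρ` would give `|w| ≤ ρ + β`. -/
theorem ConformalOnto.setOf_im_pos_lt_norm_subset_image (hK : IsHull K)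
    (hφ : ConformalOnto φ (UHP \ K) UHP) {ρ β : ℝ} (hKρ : K ⊆ closedBall 0 ρ)
    (hβ : ∀ ζ : ℂ, 0 < ζ.im → ρ ≤ ‖ζ‖ → ‖φ ζ - ζ‖ ≤ β) :
    {w : ℂ | 0 < w.im ∧ ρ + β < ‖w‖} ⊆ φ '' {ζ | 0 < ζ.im ∧ ρ < ‖ζ‖} := by
  obtain ⟨e, hes, het, rfl⟩ := hφ.exists_openPartialHomeomorph hK.isOpen_diff
  set E := {ζ : ℂ | 0 < ζ.im ∧ ρ < ‖ζ‖}
  have hEK : E ⊆ UHP \ K := fun ζ hζ =>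
    ⟨hζ.1, fun h => (mem_closedBall_zero_iff.mp (hKρ h)).not_gt hζ.2⟩
  have hEopen : IsOpen (e '' E) := (e.isOpen_image_iff_of_subset_source (hes ▸ hEK)).mpr
    ((isOpen_lt continuous_const continuous_im).inter (isOpen_lt continuous_const continuous_norm))
  refine (isPreconnected_setOf_im_pos_lt_norm _).subset_of_closure_inter_subset hEopen ?_ ?_
  · have himI : ∀ t : ℝ, ((t : ℂ) * I).im = t := fun t => by simp
    have hnormI : ∀ t : ℝ, 0 ≤ t → ‖(t : ℂ) * I‖ = t := fun t ht => by simp [abs_of_nonneg ht]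
    have hβ0 : 0 ≤ β := (norm_nonneg _).trans (hβ ((|ρ| + 1 : ℝ) * I) (by rw [himI]; positivity)
      (by rw [hnormI _ (by positivity)]; linarith [le_abs_self ρ]))
    set t := |ρ| + 2 * β + 1 with ht_def
    have ht : 0 < t := by positivity
    have hζ : (t : ℂ) * I ∈ E :=
      ⟨by rw [himI]; exact ht, by rw [hnormI _ ht.le]; linarith [le_abs_self ρ]⟩
    refine ⟨e (t * I), ⟨hφ.apply_mem (hEK hζ), ?_⟩, mem_image_of_mem e hζ⟩
    have := norm_sub_norm_le ((t : ℂ) * I) (e (t * I))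
    rw [norm_sub_rev, hnormI _ ht.le] at this
    linarith [hβ _ hζ.1 hζ.2.le, le_abs_self ρ]
  · rintro w ⟨hwcl, hwim, hwn⟩
    have hwt : w ∈ e.target := het ▸ hwim
    have hζ : e.symm w ∈ closure E := by
      have := mem_closure_image (e.continuousAt_symm hwt) hwcl
      rwa [(e.leftInvOn.mono (hes ▸ hEK)).image_image] at this
    have hρζ : ρ ≤ ‖e.symm w‖ :=
      closure_minimal (fun ζ hζ => hζ.2.le) (isClosed_le continuous_const continuous_norm) hζ
    have hsrc : e.symm w ∈ UHP \ K := hes ▸ e.map_target hwt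
    refine ⟨e.symm w, ⟨hsrc.1, hρζ.lt_of_ne fun h => ?_⟩, e.right_inv hwt⟩
    have := hβ _ hsrc.1 hρζ
    rw [e.right_inv hwt] at this
    linarith [norm_le_norm_sub_add w (e.symm w)]

theorem ConformalOnto.norm_le_add_of_norm_sub_le (hK : IsHull K)
    (hφ : ConformalOnto φ (UHP \ K) UHP) {ρ β : ℝ} (hKρ : K ⊆ closedBall 0 ρ)
    (hβ : ∀ ζ : ℂ, 0 < ζ.im → ρ ≤ ‖ζ‖ → ‖φ ζ - ζ‖ ≤ β) {z : ℂ} (hz : z ∈ UHP \ K)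
    (hzρ : ‖z‖ ≤ ρ) : ‖φ z‖ ≤ ρ + β := by
  by_contra! hgt
  obtain ⟨ζ, hζ, hφζ⟩ := hφ.setOf_im_pos_lt_norm_subset_image hK hKρ hβ ⟨hφ.apply_mem hz, hgt⟩
  have hζK : ζ ∈ UHP \ K := ⟨hζ.1, fun h => (mem_closedBall_zero_iff.mp (hKρ h)).not_gt hζ.2⟩
  exact hζ.2.not_ge (hφ.2.1 hζK hz hφζ ▸ hzρ)

theorem IsExtendedLoewnerMap.isCompact_inter_preimage (hK : IsHull K)
    (hφ : IsExtendedLoewnerMap K φ c) {ε : ℝ} (hε : 0 < ε) (S : ℝ) :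
    IsCompact ((UHP \ K) ∩ φ ⁻¹' {w | ε ≤ w.im} ∩ closedBall 0 S) := by
  obtain ⟨e, hes, het, rfl⟩ := hφ.1.1.exists_openPartialHomeomorph hK.isOpen_diff
  obtain ⟨ρ₀, hρ₀⟩ := hφ.exists_forall_norm_sub_le hK one_pos
  obtain ⟨R, hR⟩ := hK.2.1.subset_closedBall 0
  set ρ := max (max ρ₀ S) R
  set L := {w : ℂ | ε ≤ w.im} ∩ closedBall 0 (ρ + 1)
  have hLt : L ⊆ e.target := fun w hw => het ▸ show 0 < w.im from hε.trans_le hw.1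
  have hL : IsCompact L :=
    (isCompact_closedBall 0 _).inter_left (isClosed_le continuous_const continuous_im)
  have hbound : ∀ y ∈ UHP \ K, ‖y‖ ≤ S → ‖e y‖ ≤ ρ + 1 := fun y hy hyS =>
    hφ.1.1.norm_le_add_of_norm_sub_le hK
      (hR.trans (closedBall_subset_closedBall (le_max_right _ _)))
      (fun ζ _ hζ => hρ₀ ζ (((le_max_left _ _).trans (le_max_left _ _)).trans hζ)) hy
      (hyS.trans ((le_max_right _ _).trans (le_max_left _ _)))
  -- by `hbound` the set is `φ⁻¹ '' L ∩ closedBall 0 S`, and `φ⁻¹` is continuous on `ℍ ⊇ L`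
  convert (hL.image_of_continuousOn (e.continuousOn_symm.mono hLt)).inter_right
    (isClosed_closedBall (x := (0 : ℂ)) (ε := S)) using 1
  rw [e.symm_image_eq_source_inter_preimage hLt, hes]
  ext y
  constructor
  · rintro ⟨⟨hy, hyε⟩, hyS⟩
    exact ⟨⟨hy, hyε, mem_closedBall_zero_iff.mpr (hbound y hy (mem_closedBall_zero_iff.mp hyS))⟩,
      hyS⟩
  · rintro ⟨⟨hy, hyε, -⟩, hyS⟩
    exact ⟨⟨hy, hyε⟩, hyS⟩

/-- Maximum principle for `Im (φ z - z)` on the part of `ℍ \ K` where `|z| < S` and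
`Im φ z > ε`: by compactness its boundary stays inside `ℍ \ K`, and there `Im (φ z - z) ≤ ε`. -/
theorem IsExtendedLoewnerMap.im_le_im (hK : IsHull K) (hφ : IsExtendedLoewnerMap K φ c)
    {z : ℂ} (hz : z ∈ UHP \ K) : (φ z).im ≤ z.im := by
  refine le_of_forall_pos_le_add fun ε hε => ?_
  have hzim : 0 < z.im := hz.1
  by_cases hzε : (φ z).im ≤ ε
  · linarith
  obtain ⟨ρ, hρ⟩ := hφ.exists_forall_norm_sub_le hK hε
  set S := max ρ (‖z‖ + 1)
  set D := (UHP \ K) ∩ φ ⁻¹' {w | ε < w.im} ∩ ball 0 S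
  have hDopen : IsOpen D :=
    ((hφ.2.1.continuousOn.mono hK.diff_subset_sigmaStar).isOpen_inter_preimage hK.isOpen_diff
      (isOpen_lt continuous_const continuous_im)).inter isOpen_ball
  have hDcl : closure D ⊆ (UHP \ K) ∩ φ ⁻¹' {w | ε ≤ w.im} ∩ closedBall 0 S :=
    closure_minimal (inter_subset_inter (inter_subset_inter_right _ fun _ (hw : ε < _) => hw.le)
      ball_subset_closedBall) (hφ.isCompact_inter_preimage hK hε S).isClosed
  have hfr : ∀ y ∈ frontier D, (φ y - y).im ≤ ε := by
    intro y hy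
    rw [hDopen.frontier_eq] at hy
    obtain ⟨⟨hyK, -⟩, -⟩ := hDcl hy.1
    by_cases hyS : ‖y‖ < S
    · have : ¬ ε < (φ y).im := fun h => hy.2 ⟨⟨hyK, h⟩, mem_ball_zero_iff.mpr hyS⟩
      rw [sub_im]
      linarith [show 0 < y.im from hyK.1]
    · exact (im_le_norm _).trans (hρ y ((le_max_left _ _).trans (not_lt.mp hyS)))
  have hdiff : DiffContOnCl ℂ (fun y => φ y - y) D :=
    DifferentiableOn.diffContOnCl ((hφ.2.1.differentiableOn.sub differentiableOn_id).mono
      (hDcl.trans (inter_subset_left.trans (inter_subset_left.trans hK.diff_subset_sigmaStar))))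
  have hzD : z ∈ D :=
    ⟨⟨hz, not_le.mp hzε⟩, mem_ball_zero_iff.mpr ((lt_add_one _).trans_le (le_max_right _ _))⟩
  have := im_le_of_forall_mem_frontier_im_le (isBounded_ball.subset inter_subset_right) hdiff
    hfr (subset_closure hzD)
  rw [sub_im] at this
  linarith

theorem IsExtendedLoewnerMap.abs_im_sub_le (hK : IsHull K) (hφ : IsExtendedLoewnerMap K φ c)
    {z : ℂ} (hz : z ∈ SigmaStar K) : |(φ z - z).im| ≤ |z.im| := by
  refine le_of_forall_im_pos_of_conj (F := fun z => |(φ z - z).im|) (G := fun z => |z.im|)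
    hK.isOpen_sigmaStar (fun _ => hK.conj_mem_sigmaStar)
    ((continuous_abs.comp continuous_im).comp_continuousOn
      (hφ.2.1.continuousOn.sub continuousOn_id))
    (continuous_abs.comp continuous_im).continuousOn
    (fun w hw => by simp only [hφ.apply_conj_sub hw, conj_im, abs_neg])
    (fun w _ => by simp only [conj_im, abs_neg]) (fun w hw hwim => ?_) hz
  have hwK : w ∈ UHP \ K := hK.diff_eq_inter_sigmaStar ▸ ⟨hwim, hw⟩
  have h1 : 0 < (φ w).im := hφ.1.1.apply_mem hwK
  have h2 := hφ.im_le_im hK hwK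
  rw [sub_im, abs_of_pos hwim]
  exact abs_le.mpr ⟨by linarith, by linarith⟩

/-- In the chart `w = 1 / z` at infinity, `φ z - z` becomes a holomorphic function on `|w| < 1/R`
vanishing at `0`. Its imaginary part is at most `2R` on the circle `|w| = 1/(2R)`, because
`|Im (φ z - z)| ≤ |Im z|`, and Borel–Carathéodory bounds it on `|w| ≤ 1/(4R)`. -/
theorem IsExtendedLoewnerMap.norm_sub_le_of_le_norm (hK : IsHull K)
    (hφ : IsExtendedLoewnerMap K φ c) {R : ℝ} (hR : 0 < R) (hKR : K ⊆ closedBall 0 R) {z : ℂ}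
    (hz : 4 * R ≤ ‖z‖) : ‖φ z - z‖ ≤ 4 * R := by
  set g := Function.update (fun w => φ w⁻¹ - w⁻¹) 0 0
  have hg_apply : ∀ w ≠ 0, g w = φ w⁻¹ - w⁻¹ := fun w hw => Function.update_of_ne hw _ _
  have hg : DifferentiableOn ℂ g (ball 0 R⁻¹) :=
    differentiableOn_update_comp_inv hR ((hφ.2.1.differentiableOn.sub differentiableOn_id).mono
      fun _ hz => hK.mem_sigmaStar_of_lt_norm hKR hz) (hφ.tendsto_sub_cobounded hK)
  have hρ : (2 * R)⁻¹ < R⁻¹ := inv_strictAnti₀ hR (by linarith)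
  have him : ∀ w ∈ ball (0 : ℂ) (2 * R)⁻¹, (g w).im ≤ 2 * R := by
    intro w hw
    refine im_le_of_forall_mem_frontier_im_le isBounded_ball (hg.mono ?_).diffContOnCl ?_
      (subset_closure hw)
    · rw [closure_ball _ (by positivity)]
      exact closedBall_subset_ball hρ
    · intro u hu
      rw [frontier_ball _ (by positivity), mem_sphere_zero_iff_norm] at hu
      have hu0 : u ≠ 0 := by
        rintro rfl
        simp only [norm_zero] at hu
        exact (inv_pos.2 (by positivity : 0 < 2 * R)).ne hu
      have hnorm : ‖u⁻¹‖ = 2 * R := by rw [norm_inv, hu, inv_inv]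
      rw [hg_apply u hu0]
      calc (φ u⁻¹ - u⁻¹).im ≤ |(φ u⁻¹ - u⁻¹).im| := le_abs_self _
        _ ≤ |u⁻¹.im| := hφ.abs_im_sub_le hK
            (hK.mem_sigmaStar_of_lt_norm hKR (by rw [hnorm]; linarith))
        _ ≤ ‖u⁻¹‖ := abs_im_le_norm _
        _ = 2 * R := hnorm
  have hz0 : z ≠ 0 := by
    rintro rfl
    simp only [norm_zero] at hz
    linarith
  have hzw : ‖z⁻¹‖ ≤ (2 * R)⁻¹ / 2 := by
    rw [norm_inv, div_eq_mul_inv, ← mul_inv, show 2 * R * 2 = 4 * R by ring]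
    exact inv_anti₀ (by positivity) hz
  have := norm_le_two_mul_of_im_le (by positivity) (by positivity)
    (hg.mono (ball_subset_ball hρ.le)) (Function.update_self _ _ _) him hzw
  rwa [hg_apply _ (inv_ne_zero hz0), inv_inv, show 2 * (2 * R) = 4 * R by ring] at this

theorem IsExtendedLoewnerMap.norm_sub_le_of_mem_sigmaStar (hK : IsHull K)
    (hφ : IsExtendedLoewnerMap K φ c) {R : ℝ} (hR : 0 < R) (hKR : K ⊆ closedBall 0 R) {z : ℂ}
    (hz : z ∈ SigmaStar K) : ‖φ z - z‖ ≤ 12 * R := by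
  refine le_of_forall_im_pos_of_conj (F := fun z => ‖φ z - z‖) (G := fun _ => 12 * R)
    hK.isOpen_sigmaStar (fun _ => hK.conj_mem_sigmaStar)
    (hφ.2.1.continuousOn.sub continuousOn_id).norm continuousOn_const
    (fun w hw => by simp only [hφ.apply_conj_sub hw, norm_conj]) (fun _ _ => rfl)
    (fun w hw hwim => ?_) hz
  have hwK : w ∈ UHP \ K := hK.diff_eq_inter_sigmaStar ▸ ⟨hwim, hw⟩
  rcases le_or_gt (4 * R) ‖w‖ with hw4 | hw4
  · linarith [hφ.norm_sub_le_of_le_norm hK hR hKR hw4]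
  · have := hφ.1.1.norm_le_add_of_norm_sub_le hK
      (hKR.trans (closedBall_subset_closedBall (by linarith : R ≤ 4 * R)))
      (fun ζ _ hζ => hφ.norm_sub_le_of_le_norm hK hR hKR hζ) hwK hw4.le
    calc ‖φ w - w‖ ≤ ‖φ w‖ + ‖w‖ := norm_sub_le _ _
      _ ≤ 12 * R := by linarith

end LoewnerMap

theorem stmt_6_general (H : Set ℂ) (hH : IsHull H) :
    ∃ M : ℝ, 0 < M ∧ ∀ K : Set ℂ, IsHull K → K ⊆ H →
      ∀ (φ : ℂ → ℂ) (c : ℝ), IsExtendedLoewnerMap K φ c →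
        ∀ z ∈ SigmaStar H, ‖φ z - z‖ ≤ M := by
  obtain ⟨r, hr⟩ := hH.2.1.subset_closedBall 0
  refine ⟨12 * max r 1, by positivity, fun K hK hKH φ c hφ z hz => ?_⟩
  exact hφ.norm_sub_le_of_mem_sigmaStar hK (by positivity)
    (hKH.trans (hr.trans (closedBall_subset_closedBall (le_max_left _ _)))) (sigmaStar_anti hKH hz)

/-- uniform bound |φ_K(z) − z| ≤ M_H on Σ_H* over all hulls K ⊆ H. -/
theorem stmt_6 (H : Set ℂ) (hH : IsHull H) (hne : H.Nonempty) :
    ∃ M : ℝ, 0 < M ∧ ∀ K : Set ℂ, IsHull K → K ⊆ H →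
      ∀ (φ : ℂ → ℂ) (c : ℝ), IsExtendedLoewnerMap K φ c →
        ∀ z ∈ SigmaStar H, ‖φ z - z‖ ≤ M :=
  stmt_6_general H hH
end
end

section
/- Let f be analytic near a real point x with f'(x) > 0. As w → x, the expression −2f'(x)²f'(w)/(f(w) − f(x))² − 2f''(w)/(w − x) + 2f'(w)/(w − x)² converges to (1/2)·f''(x)²/f'(x) − (4/3)·f'''(x). -/
open Complex Filter
open scoped Nat Topology

/-!
Write `t = w - x` and expand `f`, `f'`, `f''` at `x` to third, second and first order with
continuous remainders, so that `f w - f x = t * H w` with `H w = f' x + f'' x / 2 * t + t ^ 2 * K w`.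
Clearing denominators, the expression becomes `2 * M w / H w ^ 2` for a polynomial `M` in `t` and
the remainders: the terms of order `t⁻²` and `t⁻¹` cancel because the Taylor coefficients of `f`,
`f'` and `f''` are compatible. Hence the limit is `2 * M x / f' x ^ 2`.
-/

theorem AnalyticAt.exists_eq_sum_add_sub_pow_smul {𝕜 E : Type*}
    [NontriviallyNormedField 𝕜] [CharZero 𝕜] [NormedAddCommGroup E] [NormedSpace 𝕜 E]
    [CompleteSpace E] {f : 𝕜 → E} {x : 𝕜} (hf : AnalyticAt 𝕜 f x) (n : ℕ) :
    ∃ R : 𝕜 → E, ContinuousAt R x ∧ R x = (n ! : 𝕜)⁻¹ • iteratedDeriv n f x ∧ ∀ w,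
      f w = (∑ i ∈ Finset.range n, ((w - x) ^ i / i !) • iteratedDeriv i f x)
        + (w - x) ^ n • R w := by
  have hg : AnalyticAt 𝕜 (fun z ↦ f (z + x)) 0 :=
    AnalyticAt.comp_of_eq (by simpa using hf) (by fun_prop) (zero_add x)
  obtain ⟨F, hF, hfF⟩ := hg.exists_eq_sum_add_pow_mul (n + 1)
  simp only [iteratedDeriv_comp_add_const, zero_add] at hfF
  refine ⟨fun w ↦ (n ! : 𝕜)⁻¹ • iteratedDeriv n f x + (w - x) • F (w - x), ?_, by simp,
    fun w ↦ ?_⟩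
  · have : ContinuousAt F (x - x) := by simpa using hF.continuousAt
    fun_prop
  · have := hfF (w - x)
    simp only [sub_add_cancel] at this
    rw [this, Finset.sum_range_succ, smul_add, smul_smul, smul_smul, pow_succ]
    module

theorem tendsto_of_third_order_expansions {F F' F'' K P Q : ℂ → ℂ} {x a b₂ b₃ : ℂ}
    (ha : a ≠ 0) (hK : ContinuousAt K x) (hP : ContinuousAt P x) (hQ : ContinuousAt Q x)
    (hKx : K x = b₃ / 6) (hQx : Q x = b₃)
    (hF : ∀ w, F w = F x + (w - x) * a + (w - x) ^ 2 / 2 * b₂ + (w - x) ^ 3 * K w)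
    (hF' : ∀ w, F' w = a + (w - x) * b₂ + (w - x) ^ 2 * P w)
    (hF'' : ∀ w, F'' w = b₂ + (w - x) * Q w) :
    Tendsto (fun w ↦ -2 * a ^ 2 * F' w / (F w - F x) ^ 2 - 2 * F'' w / (w - x)
        + 2 * F' w / (w - x) ^ 2) (𝓝[≠] x) (𝓝 (1 / 2 * b₂ ^ 2 / a - 4 / 3 * b₃)) := by
  set H : ℂ → ℂ := fun w ↦ a + b₂ / 2 * (w - x) + (w - x) ^ 2 * K w
  set M : ℂ → ℂ := fun w ↦ a * (b₂ / 2) ^ 2 + 2 * a ^ 2 * K w - a ^ 2 * Q w + (w - x) *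
    (a * K w * (b₂ + (w - x) * K w) + (P w - Q w) * (H w + a) * (b₂ / 2 + (w - x) * K w))
  have hHx : H x = a := by simp [H]
  have hH : ContinuousAt H x := by fun_prop
  have hM : ContinuousAt M x := by fun_prop
  have hHne : ∀ᶠ w in 𝓝[≠] x, H w ≠ 0 :=
    eventually_nhdsWithin_of_eventually_nhds (hH.eventually_ne (hHx ▸ ha))
  have heq : (fun w ↦ 2 * M w / H w ^ 2) =ᶠ[𝓝[≠] x] fun w ↦ -2 * a ^ 2 * F' w / (F w - F x) ^ 2
      - 2 * F'' w / (w - x) + 2 * F' w / (w - x) ^ 2 := by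
    filter_upwards [self_mem_nhdsWithin, hHne] with w (hw : w ≠ x) hHw
    have ht : w - x ≠ 0 := sub_ne_zero.mpr hw
    have hFH : F w - F x = (w - x) * H w := by rw [hF]; ring
    rw [hFH, hF', hF'']
    field_simp
    ring
  have hlim : 2 * M x / H x ^ 2 = 1 / 2 * b₂ ^ 2 / a - 4 / 3 * b₃ := by
    simp only [M, hHx, hKx, hQx, sub_self, zero_mul, add_zero]
    field_simp
    ring
  rw [← hlim]
  exact ((continuousAt_const.mul hM).div (hH.pow 2) (by simp [hHx, ha])).continuousWithinAt
    |>.tendsto.congr' heq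

theorem stmt_16_general (f : ℂ → ℂ) (x : ℝ) (hf : AnalyticAt ℂ f (x : ℂ))
    (hpos : 0 < (deriv f (x : ℂ)).re) :
    Tendsto (fun w : ℂ =>
        -2 * (deriv f (x : ℂ)) ^ 2 * deriv f w / (f w - f (x : ℂ)) ^ 2
          - 2 * deriv (deriv f) w / (w - (x : ℂ))
          + 2 * deriv f w / (w - (x : ℂ)) ^ 2)
      (nhdsWithin (x : ℂ) {((x : ℂ))}ᶜ)
      (nhds ((1/2) * (deriv (deriv f) (x : ℂ)) ^ 2 / (deriv f (x : ℂ))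
        - (4/3) * deriv (deriv (deriv f)) (x : ℂ))) := by
  have ha : deriv f x ≠ 0 := fun h ↦ by simp [h] at hpos
  obtain ⟨K, hK, hKx, hfK⟩ := hf.exists_eq_sum_add_sub_pow_smul 3
  obtain ⟨P, hP, -, hfP⟩ := hf.deriv.exists_eq_sum_add_sub_pow_smul 2
  obtain ⟨Q, hQ, hQx, hfQ⟩ := hf.deriv.deriv.exists_eq_sum_add_sub_pow_smul 1
  simp only [Finset.sum_range_succ, Finset.sum_range_zero, iteratedDeriv_succ, iteratedDeriv_zero,
    Nat.factorial, smul_eq_mul, Nat.cast_one, pow_zero, pow_one, zero_add, div_one, one_mul,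
    mul_one, inv_one] at hKx hfK hfP hQx hfQ
  exact tendsto_of_third_order_expansions ha hK hP hQ (hKx.trans (by ring)) hQx hfK hfP hfQ

/-- as w → x,
−2f'(x)²f'(w)/(f(w)−f(x))² − 2f''(w)/(w−x) + 2f'(w)/(w−x)²
→ (1/2)f''(x)²/f'(x) − (4/3)f'''(x). -/
theorem stmt_16 (f : ℂ → ℂ) (x : ℝ) (hf : AnalyticAt ℂ f (x : ℂ))
    (hreal : ∀ᶠ y : ℝ in nhds x, (f (y : ℂ)).im = 0)
    (him : (deriv f (x : ℂ)).im = 0) (hpos : 0 < (deriv f (x : ℂ)).re) :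
    Tendsto (fun w : ℂ =>
        -2 * (deriv f (x : ℂ)) ^ 2 * deriv f w / (f w - f (x : ℂ)) ^ 2
          - 2 * deriv (deriv f) w / (w - (x : ℂ))
          + 2 * deriv f w / (w - (x : ℂ)) ^ 2)
      (nhdsWithin (x : ℂ) {((x : ℂ))}ᶜ)
      (nhds ((1/2) * (deriv (deriv f) (x : ℂ)) ^ 2 / (deriv f (x : ℂ))
        - (4/3) * deriv (deriv (deriv f)) (x : ℂ))) :=
  stmt_16_general f x hf hpos
end
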